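/- If U is a random variable uniformly distributed on the interval (0,1), then the covariance of ln U and ln(1-U) equals 1 - π²/6. -/

import Mathlib

/-!
Expanding `log (1 - x) = -∑ xⁿ⁺¹ / (n + 1)` and integrating termwise against `log x` with
`∫₀¹ xⁿ log x dx = -1 / (n + 1)²` gives `E[log U · log (1 - U)] = ∑ 1 / ((n + 1)(n + 2)²)`.
The partial fractions `1 / (n + 1) - 1 / (n + 2) - 1 / (n + 2)²` split this into a telescoping
sum `1` and the tail `ζ(2) - 1`, so it equals `2 - π² / 6`; since `E[log U] = E[log (1 - U)] = -1`,
the covariance is `1 - π² / 6`.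
-/

open Real MeasureTheory ProbabilityTheory

open Filter Topology Set

lemma hasSum_sub_succ_of_antitone {f : ℕ → ℝ} {l : ℝ} (hf : Antitone f)
    (hl : Tendsto f atTop (𝓝 l)) : HasSum (fun n ↦ f n - f (n + 1)) (f 0 - l) := by
  rw [hasSum_iff_tendsto_nat_of_nonneg fun n ↦ sub_nonneg.2 (hf n.le_succ)]
  simp_rw [Finset.sum_range_sub']
  exact tendsto_const_nhds.sub hl

lemma hasSum_one_div_succ_mul_succ_succ_sq :
    HasSum (fun n : ℕ ↦ 1 / ((n + 1) * (n + 2) ^ 2 : ℝ)) (2 - π ^ 2 / 6) := by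
  have htelescope : HasSum (fun n : ℕ ↦ 1 / (n + 1 : ℝ) - 1 / (n + 2 : ℝ)) 1 := by
    have h := hasSum_sub_succ_of_antitone (f := fun n : ℕ ↦ 1 / (n + 1 : ℝ))
      (fun m n hmn ↦ by dsimp only; gcongr) tendsto_one_div_add_atTop_nhds_zero_nat
    simpa [add_assoc, one_add_one_eq_two] using h
  have hzeta : HasSum (fun n : ℕ ↦ 1 / (n + 2 : ℝ) ^ 2) (π ^ 2 / 6 - 1) := by
    simpa [Finset.sum_range_succ] using (hasSum_nat_add_iff' 2).2 hasSum_zeta_two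
  have h := htelescope.sub hzeta
  rw [show (1 : ℝ) - (π ^ 2 / 6 - 1) = 2 - π ^ 2 / 6 by ring] at h
  refine h.congr_fun fun n ↦ ?_
  field_simp
  ring

lemma continuous_pow_succ_mul_log (n : ℕ) : Continuous fun x : ℝ ↦ x ^ (n + 1) * log x :=
  ((continuous_pow n).mul continuous_mul_log).congr fun x ↦ by simp only [Pi.mul_apply]; ring

lemma integral_pow_mul_log (n : ℕ) : ∫ x in (0 : ℝ)..1, x ^ n * log x = -1 / (n + 1) ^ 2 := by
  set F : ℝ → ℝ := fun x ↦ x ^ (n + 1) * log x / (n + 1) - x ^ (n + 1) / (n + 1) ^ 2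
  have hF_cont : Continuous F :=
    ((continuous_pow_succ_mul_log n).div_const _).sub ((continuous_pow _).div_const _)
  have hF_deriv : ∀ x ∈ Ioo (0 : ℝ) 1, HasDerivAt F (x ^ n * log x) x := by
    intro x hx
    have hpow : HasDerivAt (fun y : ℝ ↦ y ^ (n + 1)) ((n + 1) * x ^ n) x := by
      simpa using hasDerivAt_pow (n + 1) x
    have hx0 : x ≠ 0 := hx.1.ne'
    refine (((hpow.mul (hasDerivAt_log hx0)).div_const (n + 1 : ℝ)).sub
      (hpow.div_const ((n + 1 : ℝ) ^ 2))).congr_deriv ?_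
    field_simp
    ring
  rw [intervalIntegral.integral_eq_sub_of_hasDerivAt_of_le zero_le_one hF_cont.continuousOn
    hF_deriv (intervalIntegral.intervalIntegrable_log'.continuousOn_mul
      (continuous_pow n).continuousOn)]
  simp [F, neg_div]

lemma integral_eq_of_hasSum_of_nonneg {α ι : Type*} [MeasurableSpace α] [Countable ι]
    {μ : Measure α} {F : ι → α → ℝ} {f : α → ℝ} {s : ℝ} (hF_nonneg : ∀ i, 0 ≤ᵐ[μ] F i)
    (hF_int : ∀ i, Integrable (F i) μ) (hs : HasSum (fun i ↦ ∫ a, F i a ∂μ) s)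
    (hf : ∀ᵐ a ∂μ, HasSum (fun i ↦ F i a) (f a)) : ∫ a, f a ∂μ = s := by
  have hnorm : ∀ i, ∫ a, ‖F i a‖ ∂μ = ∫ a, F i a ∂μ := fun i ↦
    integral_congr_ae <| (hF_nonneg i).mono fun a ha ↦ norm_of_nonneg ha
  have h := hasSum_integral_of_summable_integral_norm hF_int
    (by simpa only [hnorm] using hs.summable)
  rw [integral_congr_ae (hf.mono fun a ha ↦ ha.tsum_eq.symm)]
  exact h.unique hs

lemma setIntegral_log_Ioo : ∫ x in Ioo (0 : ℝ) 1, log x = -1 := by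
  rw [← integral_Ioc_eq_integral_Ioo, ← intervalIntegral.integral_of_le zero_le_one, integral_log]
  simp

lemma setIntegral_log_one_sub_Ioo : ∫ x in Ioo (0 : ℝ) 1, log (1 - x) = -1 := by
  rw [← integral_Ioc_eq_integral_Ioo, ← intervalIntegral.integral_of_le zero_le_one,
    intervalIntegral.integral_comp_sub_left (fun x ↦ log x), integral_log]
  simp

lemma setIntegral_log_mul_log_one_sub_Ioo :
    ∫ x in Ioo (0 : ℝ) 1, log x * log (1 - x) = 2 - π ^ 2 / 6 := by
  set F : ℕ → ℝ → ℝ := fun n x ↦ x ^ (n + 1) / (n + 1) * -log x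
  have hF_integral : ∀ n, ∫ x in Ioo 0 1, F n x = 1 / ((n + 1) * (n + 2) ^ 2) := by
    intro n
    rw [← integral_Ioc_eq_integral_Ioo, ← intervalIntegral.integral_of_le zero_le_one]
    have hF : ∀ x, F n x = -(n + 1 : ℝ)⁻¹ * (x ^ (n + 1) * log x) := fun x ↦ by simp only [F]; ring
    simp_rw [hF]
    rw [intervalIntegral.integral_const_mul, integral_pow_mul_log]
    push_cast
    field_simp
    ring
  refine integral_eq_of_hasSum_of_nonneg (F := F) (fun n ↦ ?_) (fun n ↦ ?_) ?_ ?_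
  · filter_upwards [ae_restrict_mem measurableSet_Ioo] with x hx
    exact mul_nonneg (div_nonneg (pow_nonneg hx.1.le _) n.cast_add_one_pos.le)
      (neg_nonneg.2 (log_nonpos hx.1.le hx.2.le))
  · have hF_int : IntervalIntegrable (F n) volume 0 1 :=
      intervalIntegral.intervalIntegrable_log'.neg.continuousOn_mul (by fun_prop)
    exact ((intervalIntegrable_iff_integrableOn_Ioc_of_le zero_le_one).1 hF_int).mono_set
      Ioo_subset_Ioc_self
  · simpa only [hF_integral] using hasSum_one_div_succ_mul_succ_succ_sq
  · filter_upwards [ae_restrict_mem measurableSet_Ioo] with x hx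
    have hx_abs : |x| < 1 := abs_lt.2 ⟨by linarith [hx.1], hx.2⟩
    have h := (hasSum_pow_div_log_of_abs_lt_one hx_abs).mul_right (-log x)
    rwa [neg_mul_neg, mul_comm (log (1 - x))] at h

theorem stmt_1_general {Ω : Type*} [MeasureSpace Ω]
    (U : Ω → ℝ) (hU : Measurable U)
    (hunif : Measure.map U ℙ = volume.restrict (Set.Ioo (0:ℝ) 1)) :
    (∫ ω, Real.log (U ω) * Real.log (1 - U ω) ∂ℙ)
      - (∫ ω, Real.log (U ω) ∂ℙ) * (∫ ω, Real.log (1 - U ω) ∂ℙ)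
    = 1 - Real.pi ^ 2 / 6 := by
  have hlaw : ∀ g : ℝ → ℝ, Measurable g → ∫ ω, g (U ω) ∂ℙ = ∫ x in Ioo 0 1, g x := fun g hg ↦ by
    rw [← hunif, integral_map hU.aemeasurable hg.aestronglyMeasurable]
  rw [hlaw (fun x ↦ log x * log (1 - x)) (by fun_prop), hlaw log measurable_log,
    hlaw (fun x ↦ log (1 - x)) (by fun_prop), setIntegral_log_mul_log_one_sub_Ioo,
    setIntegral_log_Ioo, setIntegral_log_one_sub_Ioo]
  ring

theorem stmt_1 {Ω : Type*} [MeasureSpace Ω] [IsProbabilityMeasure (ℙ : Measure Ω)]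
    (U : Ω → ℝ) (hU : Measurable U)
    (hunif : Measure.map U ℙ = volume.restrict (Set.Ioo (0:ℝ) 1)) :
    (∫ ω, Real.log (U ω) * Real.log (1 - U ω) ∂ℙ)
      - (∫ ω, Real.log (U ω) ∂ℙ) * (∫ ω, Real.log (1 - U ω) ∂ℙ)
    = 1 - Real.pi ^ 2 / 6 :=
  stmt_1_general U hU hunif
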